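/- Let n ≥ 2 and F a field of characteristic 0 containing a primitive 4th root of unity but no primitive 2^{n-1}-th root of unity. Then F(ζ_{2^{n-1}}) does not contain a primitive 2^n-th root of unity. -/

import Mathlib

/-!
Gal(K/F) embeds into `(ZMod (2 ^ (n - 1)))ˣ`, a group of order `2 ^ (n - 2)`, and it is
nontrivial because `ζ ∉ F`; so it contains an involution `τ`. If `ξ ∈ K` were a primitive
`2 ^ n`-th root of unity, then `τ ξ = ξ ^ A` with `A ≡ 1 [MOD 4]` (as `τ` fixes `i ∈ F`) and
`A ^ 2 ≡ 1 [MOD 2 ^ n]` (as `τ ^ 2 = 1`). Since `A + 1` is twice an odd number, the factorisation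
`A ^ 2 - 1 = (A - 1) (A + 1)` forces `A ≡ 1 [MOD 2 ^ (n - 1)]`, so `τ` fixes `ζ` and hence all of
`K = F(ζ)`, which is absurd.
-/

theorem Nat.modEq_one_of_sq_modEq_one_of_modEq_four {a k : ℕ} (h4 : a ≡ 1 [MOD 4])
    (hsq : a ^ 2 ≡ 1 [MOD 2 ^ (k + 1)]) : a ≡ 1 [MOD 2 ^ k] := by
  obtain ⟨m, rfl⟩ : ∃ m, a = 4 * m + 1 := ⟨a / 4, by unfold Nat.ModEq at h4; omega⟩
  rw [Nat.ModEq.comm, Nat.modEq_iff_dvd' (Nat.one_le_pow _ _ (by omega))] at hsq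
  rw [Nat.ModEq.comm, Nat.modEq_iff_dvd' (by omega), Nat.add_sub_cancel]
  have hfactor : (4 * m + 1) ^ 2 - 1 = 2 * ((4 * m) * (2 * m + 1)) :=
    Nat.sub_eq_of_eq_add (by ring)
  rw [hfactor, pow_succ', Nat.mul_dvd_mul_iff_left two_pos] at hsq
  have hodd : Nat.Coprime (2 ^ k) (2 * m + 1) :=
    Nat.Coprime.pow_left k (Nat.prime_two.coprime_iff_not_dvd.2 (by omega))
  exact hodd.dvd_of_dvd_mul_right hsq

theorem pow_eq_self_of_pow_eq_one_of_modEq {M : Type*} [Monoid M] {μ : M} {m a : ℕ}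
    (hμ : μ ^ m = 1) (ha : a ≡ 1 [MOD m]) : μ ^ a = μ := by
  rw [← pow_mod_orderOf, ha.of_dvd (orderOf_dvd_of_pow_eq_one hμ), pow_mod_orderOf, pow_one]

theorem IsPrimitiveRoot.modEq_one_of_pow_eq_self {M : Type*} [CommMonoid M] {ξ : M} {m a : ℕ}
    [NeZero m] (hξ : IsPrimitiveRoot ξ m) (h : ξ ^ a = ξ) : a ≡ 1 [MOD m] := by
  rw [hξ.eq_orderOf, ← (hξ.isOfFinOrder (NeZero.ne m)).pow_eq_pow_iff_modEq, pow_one, h]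

theorem IsPrimitiveRoot.map_eq_self_of_involutive_of_map_eq_self {K G : Type*} [CommRing K]
    [IsDomain K] [FunLike G K K] [MonoidHomClass G K K] {k : ℕ} (hk : 1 ≤ k) {ξ ι : K}
    (hξ : IsPrimitiveRoot ξ (2 ^ (k + 1))) (hι : IsPrimitiveRoot ι 4) (f : G)
    (hfι : f ι = ι) (hfξ : f (f ξ) = ξ) {μ : K} (hμ : μ ^ 2 ^ k = 1) : f μ = μ := by
  have hroot : ∀ x : K, x ^ 2 ^ (k + 1) = 1 → ∃ j, x = ξ ^ j := fun x hx ↦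
    (hξ.eq_pow_of_pow_eq_one hx).imp fun _ h ↦ h.2.symm
  obtain ⟨A, hA⟩ := hroot (f ξ) (by rw [← map_pow, hξ.pow_eq_one, map_one])
  have hf : ∀ j, f (ξ ^ j) = (ξ ^ j) ^ A := fun j ↦ by
    rw [map_pow, hA, ← pow_mul, ← pow_mul, mul_comm]
  have hA4 : A ≡ 1 [MOD 4] := by
    have h4 : 4 ∣ 2 ^ (k + 1) := pow_dvd_pow 2 (show 2 ≤ k + 1 by omega)
    obtain ⟨j, rfl⟩ := hroot ι ((hι.pow_eq_one_iff_dvd _).2 h4)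
    exact hι.modEq_one_of_pow_eq_self (by rw [← hf, hfι])
  have hA2 : A ^ 2 ≡ 1 [MOD 2 ^ (k + 1)] := by
    refine hξ.modEq_one_of_pow_eq_self ?_
    calc ξ ^ A ^ 2 = (ξ ^ A) ^ A := by rw [sq, pow_mul]
      _ = f (f ξ) := by rw [hA, hf]
      _ = ξ := hfξ
  obtain ⟨j, rfl⟩ := hroot μ (by rw [pow_succ, pow_mul, hμ, one_pow])
  rw [hf]
  exact pow_eq_self_of_pow_eq_one_of_modEq hμ (Nat.modEq_one_of_sq_modEq_one_of_modEq_four hA4 hA2)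

theorem IsCyclotomicExtension.exists_orderOf_eq_two {F K : Type*} [Field F] [CommRing K]
    [IsDomain K] [Algebra F K] (k : ℕ) [IsCyclotomicExtension {2 ^ k} F K]
    [Nontrivial (K ≃ₐ[F] K)] : ∃ τ : K ≃ₐ[F] K, orderOf τ = 2 := by
  have hinj := (zeta_spec (2 ^ k) F K).autToPow_injective F
  have : Finite (K ≃ₐ[F] K) := Finite.of_injective _ hinj
  have hcard : Nat.card (K ≃ₐ[F] K) ∣ 2 ^ k := calc
    Nat.card (K ≃ₐ[F] K) ∣ Nat.card (ZMod (2 ^ k))ˣ := Subgroup.card_dvd_of_injective _ hinj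
    _ = Nat.totient (2 ^ k) := by rw [Nat.card_eq_fintype_card, ZMod.card_units_eq_totient]
    _ ∣ Nat.totient (2 ^ (k + 1)) := Nat.totient_dvd_of_dvd (pow_dvd_pow 2 k.le_succ)
    _ = 2 ^ k := by simp [Nat.totient_prime_pow_succ Nat.prime_two]
  obtain ⟨m, -, hm⟩ := (Nat.dvd_prime_pow Nat.prime_two).1 hcard
  have hm0 : m ≠ 0 := by
    rintro rfl
    exact (Finite.one_lt_card (α := K ≃ₐ[F] K)).ne' (by simpa using hm)
  exact exists_prime_orderOf_dvd_card' 2 (hm ▸ dvd_pow_self 2 hm0)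

theorem IsPrimitiveRoot.isCyclotomicExtension_of_adjoin_eq_top {A B : Type*} [CommRing A]
    [CommRing B] [Algebra A B] {n : ℕ} [NeZero n] {ζ : B} (hζ : IsPrimitiveRoot ζ n)
    (hgen : Algebra.adjoin A {ζ} = ⊤) : IsCyclotomicExtension {n} A B :=
  (IsCyclotomicExtension.iff_singleton n A B).2 ⟨⟨ζ, hζ⟩, fun x ↦
    Algebra.adjoin_mono (by simpa using hζ.pow_eq_one) (hgen ▸ Algebra.mem_top)⟩

theorem adjoin_primitive_root_two_pow_general (n : ℕ) (hn : 2 ≤ n)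
    (F K : Type) [Field F] [Field K] [Algebra F K]
    (h1 : ∃ ζ : F, IsPrimitiveRoot ζ 4)
    (h2 : ¬ ∃ ζ : F, IsPrimitiveRoot ζ (2 ^ (n - 1)))
    (ζ : K) (hζ : IsPrimitiveRoot ζ (2 ^ (n - 1)))
    (hgen : Algebra.adjoin F ({ζ} : Set K) = ⊤) :
    ¬ ∃ ξ : K, IsPrimitiveRoot ξ (2 ^ n) := by
  rintro ⟨ξ, hξ⟩
  obtain ⟨ι, hι⟩ := h1
  have := hζ.isCyclotomicExtension_of_adjoin_eq_top hgen
  have := IsCyclotomicExtension.isGalois {2 ^ (n - 1)} F K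
  have := IsCyclotomicExtension.finiteDimensional {2 ^ (n - 1)} F K
  have : Nontrivial (K ≃ₐ[F] K) := by
    obtain ⟨σ, hσ⟩ : ∃ σ : K ≃ₐ[F] K, σ ζ ≠ ζ := by
      by_contra! hfix
      obtain ⟨x, rfl⟩ := (IsGalois.mem_range_algebraMap_iff_fixed ζ).2 hfix
      exact h2 ⟨x, hζ.of_map_of_injective (algebraMap F K).injective⟩
    exact nontrivial_of_ne σ 1 fun h ↦ hσ (h ▸ rfl)
  obtain ⟨τ, hτ⟩ := IsCyclotomicExtension.exists_orderOf_eq_two (F := F) (K := K) (n - 1)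
  have hτζ : τ ζ = ζ := by
    rw [← Nat.sub_add_cancel (show 1 ≤ n by omega)] at hξ
    refine hξ.map_eq_self_of_involutive_of_map_eq_self (by omega)
      (hι.map_of_injective (algebraMap F K).injective) τ (τ.commutes ι) ?_ hζ.pow_eq_one
    rw [← AlgEquiv.mul_apply, ← sq, ← hτ, pow_orderOf_eq_one, AlgEquiv.one_apply]
  have hτ1 : τ = 1 :=
    AlgEquiv.coe_toAlgHom_injective (AlgHom.ext_of_adjoin_eq_top hgen (by simpa using hτζ))
  simp [hτ1] at hτ

/-- Let `n ≥ 2` and let `F` be a field of characteristic `0` containing a primitive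
`4`-th root of unity but no primitive `2^(n-1)`-th root of unity. If `K/F` is the
extension generated by a primitive `2^(n-1)`-th root of unity `ζ`
(i.e. `K = F(ζ_{2^(n-1)})`), then `K` contains no primitive `2^n`-th root of unity. -/
theorem adjoin_primitive_root_two_pow (n : ℕ) (hn : 2 ≤ n)
    (F K : Type) [Field F] [CharZero F] [Field K] [Algebra F K]
    (h1 : ∃ ζ : F, IsPrimitiveRoot ζ 4)
    (h2 : ¬ ∃ ζ : F, IsPrimitiveRoot ζ (2 ^ (n - 1)))
    (ζ : K) (hζ : IsPrimitiveRoot ζ (2 ^ (n - 1)))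
    (hgen : Algebra.adjoin F ({ζ} : Set K) = ⊤) :
    ¬ ∃ ξ : K, IsPrimitiveRoot ξ (2 ^ n) :=
  adjoin_primitive_root_two_pow_general n hn F K h1 h2 ζ hζ hgen
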